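/- arXiv:2205.07797 — 2 statements merged into one kernel-verified Lean document; each statement's English description precedes it below -/
import Mathlib

section
/- Let n_2 ∈ ℤ², n_2 ≠ 0, and m ∈ ℤ be fixed. Let N, N_1 ≥ 1. Then the number of pairs (n, n_1) ∈ (ℤ²)² such that n lies in a ball of radius N, n_1 lies in a ball of radius N_1, n - n_1 + n_2 = 0, and |n|² - |n_1|² + |n_2|² = m, is O(min{N, N_1}). -/
/-!
Since `n₁ = n + n₂`, the quadratic constraint becomes linear: `2 ⟨n, n₂⟩ = -m`, or equivalently
`2 ⟨n₁, n₂⟩ = 2 |n₂|² - m`. As `n₂ ≠ 0`, both `n` and `n₁` range over a line, and either one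
determines the pair. A line meets a ball of radius `R` in at most `2R + 1` lattice points, because a
suitable coordinate determines the point and ranges over an interval of length `2R`.
-/

/-- `k` lies in the (closed) ball of radius `R` centered at `c ∈ ℝ²`. -/
def inBall (k : ℤ × ℤ) (c : ℝ × ℝ) (R : ℝ) : Prop :=
  ((k.1 : ℝ) - c.1) ^ 2 + ((k.2 : ℝ) - c.2) ^ 2 ≤ R ^ 2

/-- The squared Euclidean norm of a lattice point. -/
def sqNorm (k : ℤ × ℤ) : ℤ := k.1 ^ 2 + k.2 ^ 2

open Set

lemma Int.card_Icc_ceil_floor_le {x R : ℝ} (hR : 0 ≤ R) :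
    ((Finset.Icc ⌈x - R⌉ ⌊x + R⌋).card : ℝ) ≤ 2 * R + 1 := by
  rw [Int.card_Icc, ← Int.cast_natCast, Int.toNat_eq_max]
  push_cast
  exact max_le (by linarith [Int.floor_le (x + R), Int.le_ceil (x - R)]) (by linarith)

lemma ncard_le_of_injOn_of_abs_sub_le {α : Type*} {s : Set α} {f : α → ℤ} (hf : InjOn f s)
    {x R : ℝ} (hR : 0 ≤ R) (hs : ∀ a ∈ s, |(f a : ℝ) - x| ≤ R) :
    (s.ncard : ℝ) ≤ 2 * R + 1 := by
  have hmaps : MapsTo f s (Finset.Icc ⌈x - R⌉ ⌊x + R⌋) := fun a ha => by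
    obtain ⟨hlo, hhi⟩ := abs_le.1 (hs a ha)
    simp only [Finset.coe_Icc, mem_Icc, Int.ceil_le, Int.le_floor]
    constructor <;> linarith
  calc (s.ncard : ℝ) ≤ (Finset.Icc ⌈x - R⌉ ⌊x + R⌋ : Set ℤ).ncard := by
        exact_mod_cast ncard_le_ncard_of_injOn f hmaps hf (Finset.finite_toSet _)
    _ ≤ 2 * R + 1 := by
        rw [ncard_coe_finset]
        exact Int.card_Icc_ceil_floor_le hR

section inBall

variable {k : ℤ × ℤ} {c : ℝ × ℝ} {R : ℝ}

lemma inBall.abs_sub_fst_le (h : inBall k c R) (hR : 0 ≤ R) : |(k.1 : ℝ) - c.1| ≤ R :=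
  abs_le_of_sq_le_sq (by unfold inBall at h; nlinarith [sq_nonneg ((k.2 : ℝ) - c.2)]) hR

lemma inBall.abs_sub_snd_le (h : inBall k c R) (hR : 0 ≤ R) : |(k.2 : ℝ) - c.2| ≤ R :=
  abs_le_of_sq_le_sq (by unfold inBall at h; nlinarith [sq_nonneg ((k.1 : ℝ) - c.1)]) hR

lemma ncard_le_of_inBall_of_linear_eq {α : Type*} {s : Set α} {g : α → ℤ × ℤ} (hg : InjOn g s)
    {v : ℤ × ℤ} (hv : v ≠ 0) (hR : 0 ≤ R) (hball : ∀ a ∈ s, inBall (g a) c R)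
    (hline : ∀ a ∈ s, ∀ b ∈ s, v.1 * (g a).1 + v.2 * (g a).2 = v.1 * (g b).1 + v.2 * (g b).2) :
    (s.ncard : ℝ) ≤ 2 * R + 1 := by
  by_cases hv₁ : v.1 = 0
  · have hv₂ : v.2 ≠ 0 := fun hv₂ => hv (Prod.ext hv₁ hv₂)
    refine ncard_le_of_injOn_of_abs_sub_le (f := fun a => (g a).1) (fun a ha b hb h => ?_) hR
      fun a ha => (hball a ha).abs_sub_fst_le hR
    have := hline a ha b hb
    simp only [hv₁, h, zero_mul, zero_add, mul_eq_mul_left_iff, hv₂, or_false] at this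
    exact hg ha hb (Prod.ext h this)
  · refine ncard_le_of_injOn_of_abs_sub_le (f := fun a => (g a).2) (fun a ha b hb h => ?_) hR
      fun a ha => (hball a ha).abs_sub_snd_le hR
    have := hline a ha b hb
    simp only [h, add_left_inj, mul_eq_mul_left_iff, hv₁, or_false] at this
    exact hg ha hb (Prod.ext this h)

end inBall

section Resonance

variable {n n₁ n₂ : ℤ × ℤ} {m : ℤ}

lemma eq_add_of_sub_add_eq_zero (h : n - n₁ + n₂ = 0) : n₁ = n + n₂ := by
  rw [eq_comm, ← sub_eq_zero, ← h]
  abel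

lemma linear_eq_fst_of_resonant (h : n - n₁ + n₂ = 0)
    (hm : sqNorm n - sqNorm n₁ + sqNorm n₂ = m) :
    2 * (n₂.1 * n.1 + n₂.2 * n.2) = -m := by
  subst hm
  rw [eq_add_of_sub_add_eq_zero h]
  simp only [sqNorm, Prod.fst_add, Prod.snd_add]
  ring

lemma linear_eq_snd_of_resonant (h : n - n₁ + n₂ = 0)
    (hm : sqNorm n - sqNorm n₁ + sqNorm n₂ = m) :
    2 * (n₂.1 * n₁.1 + n₂.2 * n₁.2) = 2 * sqNorm n₂ - m := by
  subst hm
  rw [eq_add_of_sub_add_eq_zero h]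
  simp only [sqNorm, Prod.fst_add, Prod.snd_add]
  ring

end Resonance

/-- counting pairs `(n, n₁)` with `n₂ ≠ 0` fixed. -/
theorem count_pairs_fixed_n₂ :
    ∃ C : ℝ, 0 < C ∧ ∀ (n₂ : ℤ × ℤ), n₂ ≠ 0 → ∀ (m : ℤ) (N N₁ : ℝ), 1 ≤ N → 1 ≤ N₁ →
      ∀ c c₁ : ℝ × ℝ,
      (({p : (ℤ × ℤ) × (ℤ × ℤ) |
          inBall p.1 c N ∧ inBall p.2 c₁ N₁ ∧ p.1 - p.2 + n₂ = 0 ∧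
            sqNorm p.1 - sqNorm p.2 + sqNorm n₂ = m}.ncard : ℝ))
        ≤ C * min N N₁ := by
  refine ⟨3, by norm_num, fun n₂ hn₂ m N N₁ hN hN₁ c c₁ => ?_⟩
  set S := {p : (ℤ × ℤ) × (ℤ × ℤ) |
    inBall p.1 c N ∧ inBall p.2 c₁ N₁ ∧ p.1 - p.2 + n₂ = 0 ∧
      sqNorm p.1 - sqNorm p.2 + sqNorm n₂ = m}
  have hfst : InjOn Prod.fst S := fun p hp q hq h =>
    Prod.ext h (by rw [eq_add_of_sub_add_eq_zero hp.2.2.1, eq_add_of_sub_add_eq_zero hq.2.2.1, h])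
  have hsnd : InjOn Prod.snd S := fun p hp q hq h =>
    Prod.ext (add_right_cancel (by rw [← eq_add_of_sub_add_eq_zero hp.2.2.1,
      ← eq_add_of_sub_add_eq_zero hq.2.2.1, h])) h
  have hN' : (S.ncard : ℝ) ≤ 2 * N + 1 :=
    ncard_le_of_inBall_of_linear_eq hfst hn₂ (by linarith) (fun p hp => hp.1)
      fun p ⟨_, _, hp, hpm⟩ q ⟨_, _, hq, hqm⟩ => by
        have := linear_eq_fst_of_resonant hp hpm
        have := linear_eq_fst_of_resonant hq hqm
        omega
  have hN₁' : (S.ncard : ℝ) ≤ 2 * N₁ + 1 :=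
    ncard_le_of_inBall_of_linear_eq hsnd hn₂ (by linarith) (fun p hp => hp.2.1)
      fun p ⟨_, _, hp, hpm⟩ q ⟨_, _, hq, hqm⟩ => by
        have := linear_eq_snd_of_resonant hp hpm
        have := linear_eq_snd_of_resonant hq hqm
        omega
  rcases min_choice N N₁ with h | h <;> rw [h] <;> linarith
end

section
/- Fix t ≠ 0 real and n ∈ ℤ² with n ≠ 0, and let α ≥ 3/4. Define for N ∈ ℕ the quantity E_N = Σ_{k ∈ ℤ², |k| ≤ N, |n+k| ≤ N} ⟨n+k⟩^{-(2-2α)} ⟨k⟩^{-(2-2α)} · 2 sin(t (n·k))² / |n·k|² (with the convention that the factor equals 2t² when n·k = 0). Then E_N → ∞ as N → ∞. -/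
open Filter Finset

/- Along the line `ℤ • n⊥`, `n⊥ = (-n₂, n₁)`, the phase `n·k` vanishes, so the summand at `k = j • n⊥`
is `2t² (⟨n+k⟩ ⟨k⟩)^{-(2-2α)}` with `⟨n+k⟩, ⟨k⟩ ≍ |n| j`. Since `2 - 2α ≤ 1/2` this is at least
`t² / (|n|² j)`, and the points `j • n⊥` with `2 |n|² j ≤ N` lie in the `N`-th index set, so `E_N`
dominates a multiple of the harmonic sum up to `N / (2 |n|²)`. -/

lemma Finset.sum_comp_le_sum_of_injOn {ι κ M : Type*} [AddCommMonoid M] [PartialOrder M]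
    [IsOrderedAddMonoid M] {s : Finset ι} {t : Finset κ} {g : ι → κ} {f : κ → M}
    (hf : ∀ k ∈ t, 0 ≤ f k) (hg : Set.InjOn g s) (hst : Set.MapsTo g s t) :
    ∑ i ∈ s, f (g i) ≤ ∑ k ∈ t, f k := by
  classical
  rw [← sum_image hg]
  exact sum_le_sum_of_subset_of_nonneg (image_subset_iff.2 hst) fun k hk _ => hf k hk

lemma inv_le_rpow_of_le_pow {x b β : ℝ} {p : ℕ} (hp : 0 < p) (hb : 0 < b) (hx : 1 ≤ x)
    (hxb : x ≤ b ^ p) (hβ : -(p : ℝ)⁻¹ ≤ β) : b⁻¹ ≤ x ^ β := by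
  have hbp : (b ^ p) ^ (-(p : ℝ)⁻¹) = b⁻¹ := by
    rw [← Real.rpow_natCast, ← Real.rpow_mul hb.le, mul_neg, mul_inv_cancel₀ (by positivity),
      Real.rpow_neg_one]
  calc b⁻¹ = (b ^ p) ^ (-(p : ℝ)⁻¹) := hbp.symm
    _ ≤ x ^ (-(p : ℝ)⁻¹) := Real.rpow_le_rpow_of_nonpos (by positivity) hxb (by simp)
    _ ≤ x ^ β := Real.rpow_le_rpow_of_exponent_le hx hβ

namespace SecondMoment

noncomputable def indexSet (n : ℤ × ℤ) (N : ℕ) : Finset (ℤ × ℤ) :=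
  (Icc (-(N : ℤ), -(N : ℤ)) ((N : ℤ), (N : ℤ))).filter
    (fun k => k.1 ^ 2 + k.2 ^ 2 ≤ (N : ℤ) ^ 2 ∧ (n.1 + k.1) ^ 2 + (n.2 + k.2) ^ 2 ≤ (N : ℤ) ^ 2)

noncomputable def summand (t α : ℝ) (n k : ℤ × ℤ) : ℝ :=
  (1 + (((n.1 + k.1 : ℤ) : ℝ) ^ 2 + ((n.2 + k.2 : ℤ) : ℝ) ^ 2)) ^ (α - 1) *
    (1 + ((k.1 : ℝ) ^ 2 + (k.2 : ℝ) ^ 2)) ^ (α - 1) *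
    (if n.1 * k.1 + n.2 * k.2 = 0 then 2 * t ^ 2
      else 2 * Real.sin (t * ((n.1 * k.1 + n.2 * k.2 : ℤ) : ℝ)) ^ 2 /
        ((n.1 * k.1 + n.2 * k.2 : ℤ) : ℝ) ^ 2)

def perp (n : ℤ × ℤ) : ℤ × ℤ := (-n.2, n.1)

def normSq (n : ℤ × ℤ) : ℕ := n.1.natAbs ^ 2 + n.2.natAbs ^ 2

lemma normSq_cast (n : ℤ × ℤ) : (normSq n : ℤ) = n.1 ^ 2 + n.2 ^ 2 := by
  simp [normSq]

lemma one_le_normSq {n : ℤ × ℤ} (hn : n ≠ 0) : 1 ≤ normSq n := by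
  have : n.1 ≠ 0 ∨ n.2 ≠ 0 := by
    by_contra! h
    exact hn (Prod.ext h.1 h.2)
  rcases this with h | h <;> simp [normSq, Nat.one_le_iff_ne_zero, h]

lemma perp_ne_zero {n : ℤ × ℤ} (hn : n ≠ 0) : perp n ≠ 0 := by
  intro h
  simp only [perp, Prod.mk_eq_zero, neg_eq_zero] at h
  exact hn (Prod.ext h.2 h.1)

lemma summand_nonneg (t α : ℝ) (n k : ℤ × ℤ) : 0 ≤ summand t α n k := by
  unfold summand
  split_ifs <;> positivity

lemma smul_perp_mem_indexSet (n : ℤ × ℤ) {j N : ℕ} (hj : 1 ≤ j)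
    (hjN : 2 * normSq n * j ≤ N) : (j : ℤ) • perp n ∈ indexSet n N := by
  have hjN' : 2 * (normSq n : ℤ) * j ≤ N := by exact_mod_cast hjN
  have hc := normSq_cast n
  set c : ℤ := (normSq n : ℤ)
  set k := (j : ℤ) • perp n
  have hc0 : 0 ≤ c := by positivity
  have hj' : (1 : ℤ) ≤ j := by exact_mod_cast hj
  have hk : k.1 ^ 2 + k.2 ^ 2 = c * j ^ 2 := by
    simp only [k, perp, Prod.smul_fst, Prod.smul_snd, smul_eq_mul, hc]; ring
  have hnk : (n.1 + k.1) ^ 2 + (n.2 + k.2) ^ 2 = c * (1 + j ^ 2) := by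
    simp only [k, perp, Prod.smul_fst, Prod.smul_snd, smul_eq_mul, hc]; ring
  have hsq : (2 * c * j) ^ 2 ≤ (N : ℤ) ^ 2 := pow_le_pow_left₀ (by positivity) hjN' 2
  have hnkN : c * (1 + j ^ 2) ≤ (N : ℤ) ^ 2 :=
    calc c * (1 + j ^ 2) ≤ c * (2 * j ^ 2) := by gcongr; nlinarith
      _ ≤ c ^ 2 * (2 * j ^ 2) := by gcongr; exact Int.le_self_sq c
      _ ≤ (2 * c * j) ^ 2 := by nlinarith [sq_nonneg (c * j)]
      _ ≤ (N : ℤ) ^ 2 := hsq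
  have hkN : k.1 ^ 2 + k.2 ^ 2 ≤ (N : ℤ) ^ 2 := by rw [hk]; nlinarith
  have hN : (0 : ℤ) ≤ N := by positivity
  obtain ⟨h1, h2⟩ := abs_le_of_sq_le_sq' (a := k.1) (by nlinarith [sq_nonneg k.2]) hN
  obtain ⟨h3, h4⟩ := abs_le_of_sq_le_sq' (a := k.2) (by nlinarith [sq_nonneg k.1]) hN
  simp only [indexSet, mem_filter, mem_Icc, Prod.le_def]
  exact ⟨⟨⟨h1, h3⟩, h2, h4⟩, hkN, hnk ▸ hnkN⟩

lemma div_le_summand_smul_perp (t : ℝ) {α : ℝ} (hα : 3 / 4 ≤ α) {n : ℤ × ℤ}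
    (hn : n ≠ 0) {j : ℕ} (hj : 1 ≤ j) :
    t ^ 2 / (normSq n * j) ≤ summand t α n ((j : ℤ) • perp n) := by
  have hc : ((normSq n : ℕ) : ℝ) = (n.1 : ℝ) ^ 2 + (n.2 : ℝ) ^ 2 := by
    exact_mod_cast normSq_cast n
  have hc1 : (1 : ℝ) ≤ normSq n := by exact_mod_cast one_le_normSq hn
  set c : ℝ := (normSq n : ℝ)
  have hj1 : (1 : ℝ) ≤ j := by exact_mod_cast hj
  have horth : n.1 * ((j : ℤ) • perp n).1 + n.2 * ((j : ℤ) • perp n).2 = 0 := by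
    simp only [perp, Prod.smul_fst, Prod.smul_snd, smul_eq_mul]; ring
  have hprod : (1 + (((n.1 + ((j : ℤ) • perp n).1 : ℤ) : ℝ) ^ 2
        + ((n.2 + ((j : ℤ) • perp n).2 : ℤ) : ℝ) ^ 2)) *
      (1 + ((((j : ℤ) • perp n).1 : ℝ) ^ 2 + (((j : ℤ) • perp n).2 : ℝ) ^ 2))
      = (1 + c * (1 + j ^ 2)) * (1 + c * j ^ 2) := by
    simp only [perp, Prod.smul_fst, Prod.smul_snd, smul_eq_mul, hc]; push_cast; ring
  have hbound : (1 + c * (1 + j ^ 2)) * (1 + c * j ^ 2) ≤ (2 * c * j) ^ 4 := by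
    have hcj : 1 ≤ c * j := one_le_mul_of_one_le_of_one_le hc1 hj1
    have hcj2 : c * j ≤ (c * j) ^ 2 := by nlinarith
    have hc_le : c ≤ c * j := le_mul_of_one_le_right (by linarith) hj1
    have hj_le : j ≤ c * j := le_mul_of_one_le_left (by linarith) hc1
    have h1 : 1 + c * (1 + j ^ 2) ≤ (2 * c * j) ^ 2 := by nlinarith
    have h2 : 1 + c * j ^ 2 ≤ (2 * c * j) ^ 2 := by nlinarith
    calc _ ≤ (2 * c * j) ^ 2 * (2 * c * j) ^ 2 := mul_le_mul h1 h2 (by positivity) (by positivity)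
      _ = _ := by ring
  have hweight : (2 * c * j)⁻¹ ≤ (1 + c * (1 + j ^ 2)) ^ (α - 1) * (1 + c * j ^ 2) ^ (α - 1) := by
    rw [← Real.mul_rpow (by positivity) (by positivity)]
    exact inv_le_rpow_of_le_pow (by norm_num) (by positivity) (by nlinarith) hbound
      (by norm_num; linarith)
  unfold summand
  rw [if_pos horth, ← Real.mul_rpow (by positivity) (by positivity), hprod,
    Real.mul_rpow (by positivity) (by positivity)]
  calc t ^ 2 / (c * j) = (2 * c * j)⁻¹ * (2 * t ^ 2) := by field_simp
    _ ≤ _ := mul_le_mul_of_nonneg_right hweight (by positivity)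

end SecondMoment

open SecondMoment

/-- divergence of the second moment of the Fourier coefficients of the
Picard second iterate when `α ≥ 3/4`.  Here
`E_N = Σ_{|k| ≤ N, |n+k| ≤ N} ⟨n+k⟩^{-(2-2α)} ⟨k⟩^{-(2-2α)} · 2 sin(t(n·k))²/(n·k)²`,
with the factor equal to `2t²` when `n·k = 0`. -/
theorem second_moment_divergence (t : ℝ) (ht : t ≠ 0) (n : ℤ × ℤ) (hn : n ≠ 0)
    (α : ℝ) (hα : 3 / 4 ≤ α) :
    Tendsto (fun N : ℕ =>
      ∑ k ∈ (Finset.Icc (-(N : ℤ), -(N : ℤ)) ((N : ℤ), (N : ℤ))).filter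
          (fun k => k.1 ^ 2 + k.2 ^ 2 ≤ (N : ℤ) ^ 2 ∧
            (n.1 + k.1) ^ 2 + (n.2 + k.2) ^ 2 ≤ (N : ℤ) ^ 2),
        (1 + (((n.1 + k.1 : ℤ) : ℝ) ^ 2 + ((n.2 + k.2 : ℤ) : ℝ) ^ 2)) ^ (α - 1) *
          (1 + ((k.1 : ℝ) ^ 2 + (k.2 : ℝ) ^ 2)) ^ (α - 1) *
          (if n.1 * k.1 + n.2 * k.2 = 0 then 2 * t ^ 2
            else 2 * Real.sin (t * ((n.1 * k.1 + n.2 * k.2 : ℤ) : ℝ)) ^ 2 /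
              ((n.1 * k.1 + n.2 * k.2 : ℤ) : ℝ) ^ 2))
      atTop atTop := by
  change Tendsto (fun N : ℕ => ∑ k ∈ indexSet n N, summand t α n k) atTop atTop
  have hc := one_le_normSq hn
  have harmonic := (Real.tendsto_sum_range_one_div_nat_succ_atTop.comp
    (Nat.tendsto_div_const_atTop (by omega : 2 * normSq n ≠ 0))).const_mul_atTop
    (by positivity : 0 < t ^ 2 / normSq n)
  refine tendsto_atTop_mono (fun N => ?_) harmonic
  have hinj : Set.InjOn (fun m : ℕ => ((m + 1 : ℕ) : ℤ) • perp n) ↑(range (N / (2 * normSq n))) :=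
    ((smul_left_injective ℤ (perp_ne_zero hn)).comp
      (Nat.cast_injective.comp (add_left_injective 1))).injOn
  have hmaps : Set.MapsTo (fun m : ℕ => ((m + 1 : ℕ) : ℤ) • perp n) ↑(range (N / (2 * normSq n)))
      ↑(indexSet n N) := fun m hm =>
    smul_perp_mem_indexSet n (by omega) <| mul_comm (2 * normSq n) (m + 1) ▸
      (Nat.le_div_iff_mul_le (by omega)).1 (mem_range.1 hm)
  calc t ^ 2 / normSq n * ∑ m ∈ range (N / (2 * normSq n)), 1 / ((m : ℝ) + 1)
      = ∑ m ∈ range (N / (2 * normSq n)), t ^ 2 / (normSq n * ((m + 1 : ℕ) : ℝ)) := by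
        rw [mul_sum]; push_cast; field_simp
    _ ≤ ∑ m ∈ range (N / (2 * normSq n)), summand t α n (((m + 1 : ℕ) : ℤ) • perp n) :=
        sum_le_sum fun m _ => div_le_summand_smul_perp t hα hn (by omega)
    _ ≤ ∑ k ∈ indexSet n N, summand t α n k :=
        sum_comp_le_sum_of_injOn (fun k _ => summand_nonneg t α n k) hinj hmaps
end
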